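/- arXiv:1103.1610 — 2 statements merged into one kernel-verified Lean document; each statement's English description precedes it below -/
import Mathlib

section
/- Let p be a prime. A group G belongs to the class 𝒢(p) if and only if, for every finite abelian p-group M regarded as a trivial discrete Ĝ_p-module, the canonical map H^*(Ĝ_p, M) → H^*(G, M) induced by the pro-p completion map is an isomorphism in every degree. -/
/-!
Common definitions for formalizing "Cohomology and profinite topologies for solvable
groups of finite rank" (K. Lorensen).

Group cohomology is defined via inhomogeneous cochains.  The continuous cohomology of the
pro-`p` (resp. profinite) completion of `G` with coefficients in a finite discrete module is
the direct limit, over the normal subgroups `N` of finite `p`-power (resp. finite) index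
acting trivially on the module, of the cohomology of the quotients `G ⧸ N`; accordingly, the
statement that the completion map induces an isomorphism on cohomology is rendered as:
the canonical (inflation) maps from this directed system to `H^*(G, M)` are jointly
surjective, and any class of the system killed in `H^*(G, M)` is killed at a deeper level of
the system.
-/

open Function TensorProduct

universe u v

namespace GoodProfinite

variable {G H : Type u} {M : Type v}

/-- The multiplicative group structure on `AddAut A` (composition), as in the older Mathlib. -/
instance addAutGroup (A : Type v) [Add A] : Group (AddAut A) where
  mul g h := AddEquiv.trans h g
  one := AddEquiv.refl _
  inv := AddEquiv.symm
  mul_assoc _ _ _ := rfl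
  one_mul _ := rfl
  mul_one _ := rfl
  inv_mul_cancel := AddEquiv.self_trans_symm

/-- The differential on inhomogeneous cochains of a group `G` with coefficients in a
`G`-module `M` (the action given by `ρ : G →* AddAut M`). -/
def cochainD [Group G] [AddCommGroup M] (ρ : G →* AddAut M) (n : ℕ) :
    ((Fin n → G) → M) →+ ((Fin (n + 1) → G) → M) :=
  AddMonoidHom.mk'
    (fun f g =>
      ρ (g 0) (f fun i => g i.succ) +
        ∑ j : Fin (n + 1), (-1 : ℤ) ^ ((j : ℕ) + 1) • f (Fin.contractNth j (· * ·) g))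
    (by
      intro a b
      funext g
      simp only [Pi.add_apply, map_add, smul_add, Finset.sum_add_distrib]
      abel)

/-- The `n`-cocycles. -/
def cocycleGroup [Group G] [AddCommGroup M] (ρ : G →* AddAut M) (n : ℕ) :
    AddSubgroup ((Fin n → G) → M) :=
  (cochainD ρ n).ker

/-- The `n`-coboundaries. -/
def coboundaryGroup [Group G] [AddCommGroup M] (ρ : G →* AddAut M) :
    (n : ℕ) → AddSubgroup ((Fin n → G) → M)
  | 0 => ⊥
  | n + 1 => (cochainD ρ n).range

/-- The `n`-th group cohomology of `G` with coefficients in the `G`-module `M`. -/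
def groupCoh [Group G] [AddCommGroup M] (ρ : G →* AddAut M) (n : ℕ) : Type (max u v) :=
  cocycleGroup ρ n ⧸ (coboundaryGroup ρ n).addSubgroupOf (cocycleGroup ρ n)

instance [Group G] [AddCommGroup M] (ρ : G →* AddAut M) (n : ℕ) :
    AddCommGroup (groupCoh ρ n) :=
  inferInstanceAs (AddCommGroup (_ ⧸ _))

/-- Precomposition of cochains with a group homomorphism. -/
def precompCochain [Group G] [Group H] [AddCommGroup M] (f : G →* H) (n : ℕ) :
    ((Fin n → H) → M) →+ ((Fin n → G) → M) :=
  AddMonoidHom.mk' (fun c g => c fun i => f (g i)) (fun _ _ => rfl)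

lemma comp_contractNth [Group G] [Group H] (f : G →* H) {n : ℕ} (j : Fin (n + 1))
    (g : Fin (n + 1) → G) :
    (fun k => f (Fin.contractNth j (· * ·) g k)) =
      Fin.contractNth j (· * ·) fun i => f (g i) := by
  funext k
  unfold Fin.contractNth
  split_ifs <;> simp [map_mul]

lemma cochainD_precomp [Group G] [Group H] [AddCommGroup M] (f : G →* H)
    (ρ : H →* AddAut M) (ρ' : G →* AddAut M) (hcomp : ∀ g, ρ' g = ρ (f g)) (n : ℕ)
    (c : (Fin n → H) → M) :
    cochainD ρ' n (precompCochain f n c) = precompCochain f (n + 1) (cochainD ρ n c) := by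
  funext g
  show ρ' (g 0) (c fun i => f (g i.succ)) +
      ∑ j : Fin (n + 1), (-1 : ℤ) ^ ((j : ℕ) + 1) •
        c (fun i => f (Fin.contractNth j (· * ·) g i)) =
    ρ (f (g 0)) (c fun i => f (g i.succ)) +
      ∑ j : Fin (n + 1), (-1 : ℤ) ^ ((j : ℕ) + 1) •
        c (Fin.contractNth j (· * ·) fun i => f (g i))
  rw [hcomp]
  congr 1
  refine Finset.sum_congr rfl fun j _ => ?_
  rw [comp_contractNth]

/-- The map on cocycles induced by a group homomorphism with compatible actions. -/
def cocycleMap [Group G] [Group H] [AddCommGroup M] (f : G →* H) (ρ : H →* AddAut M)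
    (ρ' : G →* AddAut M) (hcomp : ∀ g, ρ' g = ρ (f g)) (n : ℕ) :
    cocycleGroup ρ n →+ cocycleGroup ρ' n :=
  AddMonoidHom.codRestrict ((precompCochain f n).comp (cocycleGroup ρ n).subtype) _
    (fun x => by
      have hx : cochainD ρ n x.1 = 0 := x.2
      show precompCochain f n x.1 ∈ (cochainD ρ' n).ker
      rw [AddMonoidHom.mem_ker, cochainD_precomp f ρ ρ' hcomp, hx, map_zero])

/-- The map `H^n(H, M) → H^n(G, M)` on group cohomology induced by a group homomorphism
`f : G →* H` and compatible actions (`ρ' = ρ ∘ f`); e.g. inflation maps. -/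
def cohMap [Group G] [Group H] [AddCommGroup M] (f : G →* H) (ρ : H →* AddAut M)
    (ρ' : G →* AddAut M) (hcomp : ∀ g, ρ' g = ρ (f g)) (n : ℕ) :
    groupCoh ρ n →+ groupCoh ρ' n :=
  QuotientAddGroup.map _ _ (cocycleMap f ρ ρ' hcomp n)
    (by
      intro x hx
      rw [AddSubgroup.mem_addSubgroupOf] at hx
      rw [AddSubgroup.mem_comap, AddSubgroup.mem_addSubgroupOf]
      match n, x, hx with
      | 0, x, hx =>
          have : x.1 = 0 := hx
          show (precompCochain f 0) x.1 ∈ (⊥ : AddSubgroup _)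
          rw [this, map_zero]
          exact AddSubgroup.mem_bot.mpr rfl
      | (m + 1), x, hx =>
          obtain ⟨b, hb⟩ := hx
          show (precompCochain f (m + 1)) x.1 ∈ (cochainD ρ' m).range
          exact ⟨precompCochain f m b, by rw [cochainD_precomp f ρ ρ' hcomp, hb]⟩)

/-- The action of `G ⧸ N` on `M` induced by an action of `G` on which `N` acts trivially. -/
def quotAut [Group G] [AddCommGroup M] (ρ : G →* AddAut M) (N : Subgroup G) [N.Normal]
    (h : ∀ x ∈ N, ρ x = 1) : G ⧸ N →* AddAut M :=
  QuotientGroup.lift N ρ h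

/-- The natural projection `G ⧸ N' →* G ⧸ N` when `N' ≤ N`. -/
def quotMapHom [Group G] (N N' : Subgroup G) [N.Normal] [N'.Normal] (hle : N' ≤ N) :
    G ⧸ N' →* G ⧸ N :=
  QuotientGroup.map N' N (MonoidHom.id G) fun _ hx => hle hx

lemma quotAut_comp_quotMap [Group G] [AddCommGroup M] (ρ : G →* AddAut M)
    (N N' : Subgroup G) [N.Normal] [N'.Normal] (hle : N' ≤ N) (h : ∀ x ∈ N, ρ x = 1) :
    ∀ x : G ⧸ N', quotAut ρ N' (fun g hg => h g (hle hg)) x =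
      quotAut ρ N h (quotMapHom N N' hle x) := fun x =>
  QuotientGroup.induction_on x fun _ => rfl

/-- The canonical map from the continuous cohomology of the pro-`p` completion of `G`
(the direct limit over normal subgroups of finite `p`-power index acting trivially on `M`
of the cohomology of the corresponding quotients) to `H^*(G, M)` is an isomorphism in
every degree. -/
def ProPCompletionCohIso (p : ℕ) (G : Type u) [Group G] (M : Type v) [AddCommGroup M]
    (ρ : G →* AddAut M) : Prop :=
  ∀ n : ℕ,
    (∀ x : groupCoh ρ n,
      ∃ (N : Subgroup G) (hN : N.Normal),
        haveI := hN
        ∃ (_ : ∃ k, N.index = p ^ k) (h1 : ∀ y ∈ N, ρ y = 1)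
          (z : groupCoh (quotAut ρ N h1) n),
          cohMap (QuotientGroup.mk' N) (quotAut ρ N h1) ρ (fun _ => rfl) n z = x) ∧
    (∀ (N : Subgroup G) (hN : N.Normal),
      haveI := hN
      ∀ (_ : ∃ k, N.index = p ^ k) (h1 : ∀ y ∈ N, ρ y = 1)
        (z : groupCoh (quotAut ρ N h1) n),
        cohMap (QuotientGroup.mk' N) (quotAut ρ N h1) ρ (fun _ => rfl) n z = 0 →
        ∃ (N' : Subgroup G) (hN' : N'.Normal),
          haveI := hN'
          ∃ (_ : ∃ k, N'.index = p ^ k) (hle : N' ≤ N),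
            cohMap (quotMapHom N N' hle) (quotAut ρ N h1)
              (quotAut ρ N' fun g hg => h1 g (hle hg))
              (quotAut_comp_quotMap ρ N N' hle h1) n z = 0)

/-- The analogue of `ProPCompletionCohIso` for the full profinite completion: the canonical
map from the continuous cohomology of the profinite completion of `G` to `H^*(G, M)` is an
isomorphism in every degree. -/
def ProfiniteCompletionCohIso (G : Type u) [Group G] (M : Type v) [AddCommGroup M]
    (ρ : G →* AddAut M) : Prop :=
  ∀ n : ℕ,
    (∀ x : groupCoh ρ n,
      ∃ (N : Subgroup G) (hN : N.Normal),
        haveI := hN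
        ∃ (_ : N.FiniteIndex) (h1 : ∀ y ∈ N, ρ y = 1)
          (z : groupCoh (quotAut ρ N h1) n),
          cohMap (QuotientGroup.mk' N) (quotAut ρ N h1) ρ (fun _ => rfl) n z = x) ∧
    (∀ (N : Subgroup G) (hN : N.Normal),
      haveI := hN
      ∀ (_ : N.FiniteIndex) (h1 : ∀ y ∈ N, ρ y = 1)
        (z : groupCoh (quotAut ρ N h1) n),
        cohMap (QuotientGroup.mk' N) (quotAut ρ N h1) ρ (fun _ => rfl) n z = 0 →
        ∃ (N' : Subgroup G) (hN' : N'.Normal),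
          haveI := hN'
          ∃ (_ : N'.FiniteIndex) (hle : N' ≤ N),
            cohMap (quotMapHom N N' hle) (quotAut ρ N h1)
              (quotAut ρ N' fun g hg => h1 g (hle hg))
              (quotAut_comp_quotMap ρ N N' hle h1) n z = 0)

/-- The class `𝒢(p)`: the pro-`p` completion map `G → Ĝ_p` induces an isomorphism
`H^*(Ĝ_p, M) → H^*(G, M)` for every discrete `Ĝ_p`-module `M` of finite `p`-power order,
i.e. for every `G`-module `M` of finite `p`-power order whose action factors through a
quotient of finite `p`-power index. -/
def InGp (p : ℕ) (G : Type u) [Group G] : Prop :=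
  ∀ (M : Type u) [AddCommGroup M] (ρ : G →* AddAut M),
    (∃ k, Nat.card M = p ^ k) →
    (∃ N : Subgroup G, N.Normal ∧ (∃ k, N.index = p ^ k) ∧ ∀ y ∈ N, ρ y = 1) →
    ProPCompletionCohIso p G M ρ

/-- The class `𝒢*(p)`: the profinite completion map `G → Ĝ` induces an isomorphism
`H^*(Ĝ, M) → H^*(G, M)` for every discrete `Ĝ`-module `M` of finite `p`-power order,
i.e. for every `G`-module `M` of finite `p`-power order whose action factors through a
quotient of finite index. -/
def InGpStar (p : ℕ) (G : Type u) [Group G] : Prop :=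
  ∀ (M : Type u) [AddCommGroup M] (ρ : G →* AddAut M),
    (∃ k, Nat.card M = p ^ k) →
    (∃ N : Subgroup G, N.Normal ∧ N.FiniteIndex ∧ ∀ y ∈ N, ρ y = 1) →
    ProfiniteCompletionCohIso G M ρ

/-- The class `ℱ𝒮`: groups having only finitely many subgroups of each finite index. -/
def InFS (G : Type u) [Group G] : Prop :=
  ∀ n : ℕ, n ≠ 0 → {H : Subgroup G | H.index = n}.Finite

/-- The class `ℱℋ`: groups `G` such that `H^n(G, M)` is finite for every finite
`G`-module `M` and every `n ≥ 0`. -/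
def InFH (G : Type u) [Group G] : Prop :=
  ∀ (M : Type u) [AddCommGroup M] [Finite M] (ρ : G →* AddAut M) (n : ℕ),
    Finite (groupCoh ρ n)

/-- An abelian group has finite torsion-free rank iff `ℚ ⊗ A` is finite dimensional. -/
def HasFiniteTorsionFreeRank (A : Type v) [CommGroup A] : Prop :=
  Module.Finite ℚ (ℚ ⊗[ℤ] (Additive A))

/-- An abelian group has finite `p`-rank (its `p`-torsion subgroup is a direct sum of
finitely many cyclic and quasicyclic groups) iff its `p`-socle is finite. -/
def HasFinitePRank (p : ℕ) (A : Type v) [CommGroup A] : Prop :=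
  {a : A | a ^ p = 1}.Finite

/-- `G` has finite abelian section rank: every abelian section of `G` has finite
torsion-free rank and finite `p`-rank for every prime `p`. -/
def IsFAR (G : Type u) [Group G] : Prop :=
  ∀ (H : Subgroup G) (A : Type u) [CommGroup A] (φ : H →* A), Surjective φ →
    HasFiniteTorsionFreeRank A ∧ ∀ p : ℕ, p.Prime → HasFinitePRank p A

/-- The Prüfer `p`-group `C_{p^∞}`: the subgroup of `p`-power order elements of `ℚ/ℤ`. -/
def pruferSubgroup (p : ℕ) : AddSubgroup (AddCircle (1 : ℚ)) where
  carrier := {x | ∃ n : ℕ, p ^ n • x = 0}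
  zero_mem' := ⟨0, smul_zero _⟩
  add_mem' := by
    rintro a b ⟨m, hm⟩ ⟨n, hn⟩
    refine ⟨m + n, ?_⟩
    have ha : p ^ (m + n) • a = 0 := by rw [pow_add, mul_comm, mul_smul, hm, smul_zero]
    have hb : p ^ (m + n) • b = 0 := by rw [pow_add, mul_smul, hn, smul_zero]
    rw [smul_add, ha, hb, add_zero]
  neg_mem' := by
    rintro a ⟨m, hm⟩
    exact ⟨m, by rw [smul_neg, hm, neg_zero]⟩

/-- `G` has a subgroup isomorphic to the Prüfer `p`-group `C_{p^∞}`. -/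
def HasPruferSubgroup (p : ℕ) (G : Type u) [Group G] : Prop :=
  ∃ H : Subgroup G, Nonempty (H ≃* Multiplicative (pruferSubgroup p))

/-- `G` has a section (quotient of a subgroup) isomorphic to the Prüfer `p`-group, i.e.
`p ∈ spec G`. -/
def HasPruferSection (p : ℕ) (G : Type u) [Group G] : Prop :=
  ∃ (H : Subgroup G) (φ : H →* Multiplicative (pruferSubgroup p)), Surjective φ

/-- `H ≤_t G`: `H` is topologically embedded in `G`, i.e. the profinite topology of `G`
induces the full profinite topology on `H`. -/
def TopEmbedded {G : Type u} [Group G] (H : Subgroup G) : Prop :=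
  ∀ K : Subgroup H, K.Normal → K.FiniteIndex →
    ∃ L : Subgroup G, L.Normal ∧ L.FiniteIndex ∧ L.subgroupOf H ≤ K

/-- `H ≤_{t(p)} G`: `H` is topologically `p`-embedded in `G`, i.e. the pro-`p` topology of
`G` induces the full pro-`p` topology on `H`. -/
def TopPEmbedded (p : ℕ) {G : Type u} [Group G] (H : Subgroup G) : Prop :=
  ∀ K : Subgroup H, K.Normal → (∃ k, K.index = p ^ k) →
    ∃ L : Subgroup G, L.Normal ∧ (∃ k, L.index = p ^ k) ∧ L.subgroupOf H ≤ K

/-- The pro-`p` topology on `G` is homogeneous: every subgroup of `G` is topologically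
`p`-embedded in `G`. -/
def PHomogeneous (p : ℕ) (G : Type u) [Group G] : Prop :=
  ∀ H : Subgroup G, TopPEmbedded p H

/-- The `p`-residual of `G`: the kernel of the pro-`p` completion map, i.e. the
intersection of all normal subgroups of finite `p`-power index. -/
def pResidual (p : ℕ) (G : Type u) [Group G] : Subgroup G :=
  ⨅ (N : Subgroup G) (_ : N.Normal) (_ : ∃ k, N.index = p ^ k), N

/-- A `p'`-group: every element has finite order coprime to `p`. -/
def IsPPrimeGroup (p : ℕ) (G : Type u) [Group G] : Prop :=
  ∀ g : G, IsOfFinOrder g ∧ Nat.Coprime (orderOf g) p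

/-- The profinite topology on `G`, with the cosets of the normal subgroups of finite index
as basic open sets. -/
def profiniteTopology (G : Type u) [Group G] : TopologicalSpace G :=
  ⨅ (N : Subgroup G) (_ : N.Normal) (_ : N.FiniteIndex),
    TopologicalSpace.induced (QuotientGroup.mk (s := N)) ⊥

lemma normal_of_le_center {G : Type u} [Group G] {A : Subgroup G}
    (hA : A ≤ Subgroup.center G) : A.Normal :=
  ⟨fun a ha g => by
    have hc := (Subgroup.mem_center_iff.mp (hA ha)) g
    have : g * a * g⁻¹ = a := by rw [hc]; group
    rwa [this]⟩

/-!
The inflation maps identify `H^*(Ĝ_p, M)` with the direct limit of the `H^*(G ⧸ N, M)` over the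
normal subgroups `N` of `p`-power index acting trivially on `M`. Direct limits are exact, so the
four lemma, applied level by level to the long exact cohomology sequences of
`0 → A → M → M ⧸ A → 0`, shows that the modules for which the comparison map is an isomorphism
are closed under extensions. If `G` acts on a nontrivial finite `p`-group `M` through a finite
`p`-group `G ⧸ N`, then the invariants `A = M^G` are nontrivial, since the orbits of `G ⧸ N` have
`p`-power size; `A` is a trivial module, and induction on `|M|` reduces everything to trivial
modules.
-/

section CochainSquare

variable [Group G] [AddCommGroup M]

/-- `cochainD` squares to zero because it is the differential of Mathlib's inhomogeneous cochains,
which need the ring, the group and the module in one universe; hence the lifts. -/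
noncomputable abbrev uliftRep (σ : G →* AddAut M) : Rep (ULift.{max u v} ℤ) (ULift.{v} G) :=
  Rep.of (X := ULift.{u} M)
    { toFun := fun g =>
        { toFun := fun m => ⟨σ g.down m.down⟩
          map_add' := fun a b => congrArg ULift.up (map_add (σ g.down) a.down b.down)
          map_smul' := fun r m => congrArg ULift.up (map_zsmul (σ g.down) r.down m.down) }
      map_one' := by ext m; simp; rfl
      map_mul' := fun g h => by ext m; simp; rfl }

def uliftCochain (σ : G →* AddAut M) {n : ℕ} (c : (Fin n → G) → M) :
    (Fin n → ULift.{v} G) → uliftRep σ :=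
  fun g => (⟨c fun i => (g i).down⟩ : ULift.{u} M)

lemma d_uliftCochain (σ : G →* AddAut M) (n : ℕ) (c : (Fin n → G) → M) :
    (inhomogeneousCochains.d (uliftRep σ) n).hom (uliftCochain σ c) =
      uliftCochain σ (cochainD σ n c) := by
  funext g
  apply ULift.ext
  have hdown : ∀ j : Fin (n + 1), (fun i => (Fin.contractNth j (· * ·) g i).down) =
      Fin.contractNth j (· * ·) fun i => (g i).down :=
    fun j => Fin.comp_contractNth _ _ (fun _ _ => rfl) j g
  simp only [inhomogeneousCochains.d_hom_apply, uliftCochain, cochainD, AddMonoidHom.mk'_apply]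
  rw [show ∀ x : uliftRep σ, x.down = AddEquiv.ulift x from fun _ => rfl, map_add, map_sum]
  simp only [hdown]
  rfl

theorem cochainD_cochainD (σ : G →* AddAut M) (n : ℕ) (c : (Fin n → G) → M) :
    cochainD σ (n + 1) (cochainD σ n c) = 0 := by
  have h := congr(($(groupCohomology.inhomogeneousCochains.d_comp_d n (uliftRep σ))).hom
    (uliftCochain σ c))
  rw [ModuleCat.hom_comp, LinearMap.comp_apply, d_uliftCochain, d_uliftCochain] at h
  funext g
  exact congrArg ULift.down (congrFun h fun i => ⟨g i⟩)

end CochainSquare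

section CoefficientMaps

variable [Group G] [AddCommGroup M] {M' : Type*} [AddCommGroup M']

def Intertwines (φ : M →+ M') (σ : G →* AddAut M) (σ' : G →* AddAut M') : Prop :=
  ∀ g m, φ (σ g m) = σ' g (φ m)

def cohClass (σ : G →* AddAut M) (n : ℕ) : cocycleGroup σ n →+ groupCoh σ n :=
  QuotientAddGroup.mk' _

lemma cohClass_surjective (σ : G →* AddAut M) (n : ℕ) : Surjective (cohClass σ n) :=
  QuotientAddGroup.mk'_surjective _

lemma cohClass_eq_zero_iff {σ : G →* AddAut M} {n : ℕ} {c : cocycleGroup σ n} :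
    cohClass σ n c = 0 ↔ c.1 ∈ coboundaryGroup σ n :=
  (QuotientAddGroup.eq_zero_iff c).trans AddSubgroup.mem_addSubgroupOf

lemma cohClass_eq_cohClass_iff {σ : G →* AddAut M} {n : ℕ} {c c' : cocycleGroup σ n} :
    cohClass σ n c = cohClass σ n c' ↔ c.1 - c'.1 ∈ coboundaryGroup σ n := by
  rw [← sub_eq_zero, ← map_sub, cohClass_eq_zero_iff, AddSubgroup.coe_sub]

lemma cohMap_comp {K : Type u} [Group H] [Group K] (f₁ : G →* H) (f₂ : H →* K) (f : G →* K)
    (hf : ∀ g, f₂ (f₁ g) = f g) (ρ : K →* AddAut M) (ρ₁ : H →* AddAut M) (ρ₀ : G →* AddAut M)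
    (h₂ : ∀ h, ρ₁ h = ρ (f₂ h)) (h₁ : ∀ g, ρ₀ g = ρ₁ (f₁ g)) (h : ∀ g, ρ₀ g = ρ (f g))
    (n : ℕ) (z : groupCoh ρ n) :
    cohMap f₁ ρ₁ ρ₀ h₁ n (cohMap f₂ ρ ρ₁ h₂ n z) = cohMap f ρ ρ₀ h n z := by
  obtain ⟨c, rfl⟩ := cohClass_surjective ρ n z
  refine congrArg (cohClass ρ₀ n) (Subtype.ext (funext fun g => ?_))
  exact congrArg c.1 (funext fun i => hf (g i))

lemma cochainD_compLeft {φ : M →+ M'} {σ : G →* AddAut M} {σ' : G →* AddAut M'}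
    (hφ : Intertwines φ σ σ') (n : ℕ) (c : (Fin n → G) → M) :
    cochainD σ' n (φ.compLeft _ c) = φ.compLeft _ (cochainD σ n c) := by
  funext g
  simp [cochainD, ← hφ _, map_sum, map_zsmul]

lemma compLeft_mem_coboundaryGroup {φ : M →+ M'} {σ : G →* AddAut M} {σ' : G →* AddAut M'}
    (hφ : Intertwines φ σ σ') {n : ℕ} {c : (Fin n → G) → M}
    (hc : c ∈ coboundaryGroup σ n) : φ.compLeft _ c ∈ coboundaryGroup σ' n := by
  cases n with
  | zero =>
    rw [coboundaryGroup, AddSubgroup.mem_bot] at hc ⊢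
    rw [hc, map_zero]
  | succ n =>
    obtain ⟨b, rfl⟩ := hc
    exact ⟨φ.compLeft _ b, cochainD_compLeft hφ n b⟩

def coefCocycleMap (φ : M →+ M') (σ : G →* AddAut M) (σ' : G →* AddAut M')
    (hφ : Intertwines φ σ σ') (n : ℕ) : cocycleGroup σ n →+ cocycleGroup σ' n :=
  ((φ.compLeft _).comp (cocycleGroup σ n).subtype).codRestrict _ fun c => by
    change cochainD σ' n (φ.compLeft _ c.1) = 0
    rw [cochainD_compLeft hφ, show cochainD σ n c.1 = 0 from c.2, map_zero]

def coefCohMap (φ : M →+ M') (σ : G →* AddAut M) (σ' : G →* AddAut M')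
    (hφ : Intertwines φ σ σ') (n : ℕ) : groupCoh σ n →+ groupCoh σ' n :=
  QuotientAddGroup.map _ _ (coefCocycleMap φ σ σ' hφ n) fun c hc => by
    rw [AddSubgroup.mem_addSubgroupOf] at hc
    rw [AddSubgroup.mem_comap, AddSubgroup.mem_addSubgroupOf]
    exact compLeft_mem_coboundaryGroup hφ hc

lemma coefCohMap_cohMap [Group H] (f : G →* H) (φ : M →+ M')
    (ρ : H →* AddAut M) (ρ' : H →* AddAut M') (τ : G →* AddAut M) (τ' : G →* AddAut M')
    (hτ : ∀ g, τ g = ρ (f g)) (hτ' : ∀ g, τ' g = ρ' (f g))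
    (hφ : Intertwines φ ρ ρ') (hφ' : Intertwines φ τ τ') (n : ℕ) (z : groupCoh ρ n) :
    coefCohMap φ τ τ' hφ' n (cohMap f ρ τ hτ n z) =
      cohMap f ρ' τ' hτ' n (coefCohMap φ ρ ρ' hφ n z) := by
  obtain ⟨c, rfl⟩ := cohClass_surjective ρ n z
  rfl

end CoefficientMaps

section QuotientValued

variable [AddCommGroup M] {A : AddSubgroup M} {I : Type*}

lemma compLeft_subtype_injective : Injective (A.subtype.compLeft I) :=
  Subtype.val_injective.comp_left

lemma compLeft_mk'_out (b : I → M ⧸ A) :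
    (QuotientAddGroup.mk' A).compLeft I (fun i => (b i).out) = b :=
  funext fun i => QuotientAddGroup.out_eq' (b i)

lemma exists_compLeft_subtype_eq {c : I → M} (hc : (QuotientAddGroup.mk' A).compLeft I c = 0) :
    ∃ a, A.subtype.compLeft I a = c :=
  ⟨fun i => ⟨c i, (QuotientAddGroup.eq_zero_iff _).1 (congrFun hc i)⟩, rfl⟩

lemma compLeft_mk'_compLeft_subtype (a : I → A) :
    (QuotientAddGroup.mk' A).compLeft I (A.subtype.compLeft I a) = 0 :=
  funext fun i => (QuotientAddGroup.eq_zero_iff _).2 (a i).2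

end QuotientValued

section ShortExact

variable [Group G] [AddCommGroup M] {A : AddSubgroup M} {σ : G →* AddAut M}
  {σA : G →* AddAut A} {σB : G →* AddAut (M ⧸ A)}

lemma eq_one_of_intertwines_subtype (hA : Intertwines A.subtype σA σ) {g : G} (hg : σ g = 1) :
    σA g = 1 :=
  AddEquiv.ext fun a => Subtype.ext <| (hA g a).trans (by rw [hg]; rfl)

lemma eq_one_of_intertwines_mk' (hB : Intertwines (QuotientAddGroup.mk' A) σ σB) {g : G}
    (hg : σ g = 1) : σB g = 1 :=
  AddEquiv.ext fun b => QuotientAddGroup.induction_on b fun m =>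
    (hB g m).symm.trans (by rw [hg]; rfl)

lemma cochainD_eq_zero_of_mem_coboundaryGroup {n : ℕ} {c : (Fin n → G) → M}
    (hc : c ∈ coboundaryGroup σ n) : cochainD σ n c = 0 := by
  cases n with
  | zero => rw [coboundaryGroup, AddSubgroup.mem_bot] at hc; rw [hc, map_zero]
  | succ n => obtain ⟨e, rfl⟩ := hc; exact cochainD_cochainD σ n e

lemma cochainD_eq_zero_of_compLeft_subtype (hA : Intertwines A.subtype σA σ) {n : ℕ}
    {a : (Fin n → G) → A} (ha : cochainD σ n (A.subtype.compLeft _ a) = 0) :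
    cochainD σA n a = 0 :=
  compLeft_subtype_injective (by rwa [map_zero, ← cochainD_compLeft hA])

lemma exists_mem_coboundaryGroup_compLeft_mk'_sub_eq_zero
    (hB : Intertwines (QuotientAddGroup.mk' A) σ σB) {n : ℕ} {c : (Fin n → G) → M}
    (hc : (QuotientAddGroup.mk' A).compLeft _ c ∈ coboundaryGroup σB n) :
    ∃ c' ∈ coboundaryGroup σ n, (QuotientAddGroup.mk' A).compLeft _ (c - c') = 0 := by
  cases n with
  | zero =>
    rw [coboundaryGroup, AddSubgroup.mem_bot] at hc
    exact ⟨0, zero_mem _, by rwa [sub_zero]⟩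
  | succ n =>
    obtain ⟨e, he⟩ := hc
    refine ⟨cochainD σ n fun g => (e g).out, ⟨_, rfl⟩, ?_⟩
    rw [map_sub, ← cochainD_compLeft hB, compLeft_mk'_out, he, sub_self]

lemma cochainD_out_mem (hB : Intertwines (QuotientAddGroup.mk' A) σ σB) {n : ℕ}
    (b : cocycleGroup σB n) (g : Fin (n + 1) → G) :
    cochainD σ n (fun g => (b.1 g).out) g ∈ A := by
  have h : (QuotientAddGroup.mk' A).compLeft _ (cochainD σ n fun g => (b.1 g).out) = 0 := by
    rw [← cochainD_compLeft hB, compLeft_mk'_out]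
    exact b.2
  exact (QuotientAddGroup.eq_zero_iff _).1 (congrFun h g)

variable (hA : Intertwines A.subtype σA σ) (hB : Intertwines (QuotientAddGroup.mk' A) σ σB)

noncomputable def deltaCocycle (n : ℕ) (b : cocycleGroup σB n) : cocycleGroup σA (n + 1) :=
  ⟨fun g => ⟨_, cochainD_out_mem hB b g⟩,
    cochainD_eq_zero_of_compLeft_subtype hA (cochainD_cochainD σ n fun g => (b.1 g).out)⟩

lemma cohClass_deltaCocycle_eq {n : ℕ} (b : cocycleGroup σB n) (m : (Fin n → G) → M)
    (hm : (QuotientAddGroup.mk' A).compLeft _ m = b.1) (a : cocycleGroup σA (n + 1))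
    (ha : A.subtype.compLeft _ a.1 = cochainD σ n m) :
    cohClass σA (n + 1) (deltaCocycle hA hB n b) = cohClass σA (n + 1) a := by
  obtain ⟨w, hw⟩ := exists_compLeft_subtype_eq (A := A) (c := (fun g => (b.1 g).out) - m)
    (by rw [map_sub, compLeft_mk'_out, hm, sub_self])
  refine cohClass_eq_cohClass_iff.2 ⟨w, compLeft_subtype_injective ?_⟩
  rw [← cochainD_compLeft hA, hw, map_sub, map_sub, ha]
  rfl

noncomputable def delta (n : ℕ) : groupCoh σB n →+ groupCoh σA (n + 1) :=
  QuotientAddGroup.lift _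
    (AddMonoidHom.mk' (fun b => cohClass σA (n + 1) (deltaCocycle hA hB n b)) fun b b' => by
      rw [← map_add]
      refine cohClass_deltaCocycle_eq hA hB (b + b')
        ((fun g => (b.1 g).out) + fun g => (b'.1 g).out) ?_ _ ?_
      · rw [map_add, compLeft_mk'_out, compLeft_mk'_out]
        rfl
      · rw [map_add (cochainD σ n)]
        rfl)
    fun b hb => by
      rw [AddSubgroup.mem_addSubgroupOf] at hb
      obtain ⟨c, hc, hbc⟩ := exists_mem_coboundaryGroup_compLeft_mk'_sub_eq_zero hB
        (c := fun g => (b.1 g).out) (by rwa [compLeft_mk'_out])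
      rw [map_sub, compLeft_mk'_out, sub_eq_zero] at hbc
      refine (cohClass_deltaCocycle_eq hA hB b c hbc.symm 0 ?_).trans (map_zero _)
      rw [cochainD_eq_zero_of_mem_coboundaryGroup hc]
      rfl

lemma delta_coefCohMap_mk' (n : ℕ) (z : groupCoh σ n) :
    delta hA hB n (coefCohMap (QuotientAddGroup.mk' A) σ σB hB n z) = 0 := by
  obtain ⟨c, rfl⟩ := cohClass_surjective σ n z
  refine (cohClass_deltaCocycle_eq hA hB _ c.1 rfl 0 ?_).trans (map_zero _)
  rw [show cochainD σ n c.1 = 0 from c.2]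
  rfl

lemma coefCohMap_subtype_delta (n : ℕ) (z : groupCoh σB n) :
    coefCohMap A.subtype σA σ hA (n + 1) (delta hA hB n z) = 0 := by
  obtain ⟨b, rfl⟩ := cohClass_surjective σB n z
  exact cohClass_eq_zero_iff.2 ⟨fun g => (b.1 g).out, rfl⟩

lemma exists_coefCohMap_subtype_eq {n : ℕ} {z : groupCoh σ n}
    (hz : coefCohMap (QuotientAddGroup.mk' A) σ σB hB n z = 0) :
    ∃ w, coefCohMap A.subtype σA σ hA n w = z := by
  obtain ⟨c, rfl⟩ := cohClass_surjective σ n z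
  obtain ⟨c', hc', hcc'⟩ :=
    exists_mem_coboundaryGroup_compLeft_mk'_sub_eq_zero hB (cohClass_eq_zero_iff.1 hz)
  rw [AddSubgroup.coe_subtype] at hcc'
  obtain ⟨a, ha⟩ := exists_compLeft_subtype_eq hcc'
  have hcoc : cochainD σA n a = 0 := cochainD_eq_zero_of_compLeft_subtype hA (by
    rw [ha, map_sub, show cochainD σ n c.1 = 0 from c.2,
      cochainD_eq_zero_of_mem_coboundaryGroup hc', sub_zero])
  refine ⟨cohClass σA n ⟨a, hcoc⟩, cohClass_eq_cohClass_iff.2 ?_⟩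
  change A.subtype.compLeft _ a - c.1 ∈ _
  rwa [ha, sub_sub_cancel_left, neg_mem_iff]

lemma exists_coefCohMap_mk'_eq {n : ℕ} {z : groupCoh σB n} (hz : delta hA hB n z = 0) :
    ∃ w, coefCohMap (QuotientAddGroup.mk' A) σ σB hB n w = z := by
  obtain ⟨b, rfl⟩ := cohClass_surjective σB n z
  obtain ⟨a, ha⟩ := cohClass_eq_zero_iff.1 hz
  have hcoc : cochainD σ n ((fun g => (b.1 g).out) - A.subtype.compLeft _ a) = 0 := by
    rw [map_sub, cochainD_compLeft hA, ha, sub_eq_zero]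
    rfl
  refine ⟨cohClass σ n ⟨_, hcoc⟩, congrArg (cohClass σB n) (Subtype.ext ?_)⟩
  change (QuotientAddGroup.mk' A).compLeft _ (_ - _) = _
  rw [map_sub, compLeft_mk'_out, compLeft_mk'_compLeft_subtype, sub_zero]

lemma exists_delta_eq {n : ℕ} {z : groupCoh σA (n + 1)}
    (hz : coefCohMap A.subtype σA σ hA (n + 1) z = 0) : ∃ b, delta hA hB n b = z := by
  obtain ⟨a, rfl⟩ := cohClass_surjective σA (n + 1) z
  obtain ⟨m, hm⟩ := cohClass_eq_zero_iff.1 hz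
  have hcoc : cochainD σB n ((QuotientAddGroup.mk' A).compLeft _ m) = 0 := by
    rw [cochainD_compLeft hB]
    exact (congrArg _ hm).trans (compLeft_mk'_compLeft_subtype a.1)
  exact ⟨cohClass σB n ⟨_, hcoc⟩, cohClass_deltaCocycle_eq hA hB _ m rfl a hm.symm⟩

lemma coefCohMap_subtype_zero_injective : Injective (coefCohMap A.subtype σA σ hA 0) := by
  refine (injective_iff_map_eq_zero _).2 fun z hz => ?_
  obtain ⟨a, rfl⟩ := cohClass_surjective σA 0 z
  have ha : A.subtype.compLeft _ a.1 = 0 := cohClass_eq_zero_iff.1 hz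
  rw [show a = 0 from Subtype.ext (compLeft_subtype_injective (ha.trans (map_zero _).symm)),
    map_zero]

lemma delta_cohMap [Group H] (f : H →* G) {τ : H →* AddAut M} {τA : H →* AddAut A}
    {τB : H →* AddAut (M ⧸ A)} (hA' : Intertwines A.subtype τA τ)
    (hB' : Intertwines (QuotientAddGroup.mk' A) τ τB)
    (hf : ∀ h, τ h = σ (f h)) (hfA : ∀ h, τA h = σA (f h)) (hfB : ∀ h, τB h = σB (f h))
    (n : ℕ) (z : groupCoh σB n) :
    delta hA' hB' n (cohMap f σB τB hfB n z) = cohMap f σA τA hfA (n + 1) (delta hA hB n z) := by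
  obtain ⟨b, rfl⟩ := cohClass_surjective σB n z
  refine cohClass_deltaCocycle_eq hA' hB' (cocycleMap f σB τB hfB n b)
    (precompCochain f n fun g => (b.1 g).out)
    (congrArg (precompCochain f n) (compLeft_mk'_out b.1)) _ ?_
  rw [cochainD_precomp f σ τ hf]
  rfl

end ShortExact

/-- Over a codirected index type, `Y` is the direct limit of the `X i` iff `ιSurjective` and
`ιInjective` hold. -/
structure DirectedCocone (I : Type*) [Preorder I] (Y : Type*) [AddCommGroup Y] where
  X : I → Type*
  [addCommGroup : ∀ i, AddCommGroup (X i)]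
  res : ∀ {i j : I}, j ≤ i → X i →+ X j
  res_res : ∀ {i j k : I} (hij : j ≤ i) (hjk : k ≤ j) (x : X i),
    res hjk (res hij x) = res (hjk.trans hij) x
  ι : ∀ i, X i →+ Y
  ι_res : ∀ {i j : I} (h : j ≤ i) (x : X i), ι j (res h x) = ι i x

attribute [instance] DirectedCocone.addCommGroup

namespace DirectedCocone

variable {I : Type*} [Preorder I] {Y₀ Y₁ Y₂ Y₃ Y₄ : Type*} [AddCommGroup Y₀] [AddCommGroup Y₁]
  [AddCommGroup Y₂] [AddCommGroup Y₃] [AddCommGroup Y₄]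

def ιSurjective (C : DirectedCocone I Y₁) : Prop :=
  ∀ y, ∃ i x, C.ι i x = y

def ιInjective (C : DirectedCocone I Y₁) : Prop :=
  ∀ i x, C.ι i x = 0 → ∃ j, ∃ h : j ≤ i, C.res h x = 0

structure Hom (C : DirectedCocone I Y₁) (D : DirectedCocone I Y₂) (f : Y₁ →+ Y₂) where
  app : ∀ i, C.X i →+ D.X i
  app_res : ∀ {i j : I} (h : j ≤ i) (x : C.X i), app j (C.res h x) = D.res h (app i x)
  ι_app : ∀ i (x : C.X i), D.ι i (app i x) = f (C.ι i x)

variable {C₀ : DirectedCocone I Y₀} {C₁ : DirectedCocone I Y₁}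
  {C₂ : DirectedCocone I Y₂} {C₃ : DirectedCocone I Y₃} {C₄ : DirectedCocone I Y₄}
  {δ₀ : Y₀ →+ Y₁} {f : Y₁ →+ Y₂} {g : Y₂ →+ Y₃} {δ : Y₃ →+ Y₄}

theorem ιInjective_of_exact (F : C₁.Hom C₂ f) (F' : C₂.Hom C₃ g) (h₃ : C₃.ιInjective)
    (hFF' : ∀ i x, F'.app i x = 0 → ∃ a, F.app i a = x)
    (hF : ∀ i a, f (C₁.ι i a) = 0 → ∃ j, ∃ h : j ≤ i, F.app j (C₁.res h a) = 0) :
    C₂.ιInjective := by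
  intro i z hz
  obtain ⟨j, hji, hj⟩ := h₃ i (F'.app i z) (by rw [F'.ι_app, hz, map_zero])
  obtain ⟨a, ha⟩ := hFF' j (C₂.res hji z) (by rw [F'.app_res, hj])
  obtain ⟨k, hkj, hk⟩ := hF j a (by rw [← F.ι_app, ha, C₂.ι_res, hz])
  exact ⟨k, hkj.trans hji, by rw [← C₂.res_res hji hkj, ← ha, ← F.app_res, hk]⟩

theorem exists_app_res_eq_zero_of_injective (F : C₁.Hom C₂ f) (h₁ : C₁.ιInjective)
    (hf : Injective f) (i : I) (a : C₁.X i) (ha : f (C₁.ι i a) = 0) :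
    ∃ j, ∃ h : j ≤ i, F.app j (C₁.res h a) = 0 := by
  obtain ⟨j, hji, hj⟩ := h₁ i a ((injective_iff_map_eq_zero f).1 hf _ ha)
  exact ⟨j, hji, by rw [hj, map_zero]⟩

variable [IsCodirectedOrder I]

theorem ιSurjective_of_exact (F : C₁.Hom C₂ f) (F' : C₂.Hom C₃ g) (D : C₃.Hom C₄ δ)
    (h₁ : C₁.ιSurjective) (h₃ : C₃.ιSurjective) (h₄ : C₄.ιInjective)
    (hfg : ∀ y, g y = 0 → ∃ a, f a = y) (hgδ : ∀ y, δ (g y) = 0)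
    (hF'D : ∀ i b, D.app i b = 0 → ∃ w, F'.app i w = b) : C₂.ιSurjective := by
  intro y
  obtain ⟨i, b, hb⟩ := h₃ (g y)
  obtain ⟨j, hji, hj⟩ := h₄ i (D.app i b) (by rw [D.ι_app, hb, hgδ])
  obtain ⟨w, hw⟩ := hF'D j (C₃.res hji b) (by rw [D.app_res, hj])
  obtain ⟨a, ha⟩ := hfg (C₂.ι j w - y) (by rw [map_sub, ← F'.ι_app, hw, C₃.ι_res, hb, sub_self])
  obtain ⟨k, a', ha'⟩ := h₁ a
  obtain ⟨l, hlj, hlk⟩ := exists_le_le j k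
  refine ⟨l, C₂.res hlj w - F.app l (C₁.res hlk a'), ?_⟩
  rw [map_sub, C₂.ι_res, F.ι_app, C₁.ι_res, ha', ha, sub_sub_cancel]

theorem exists_app_res_eq_zero_of_exact (D₀ : C₀.Hom C₁ δ₀) (F : C₁.Hom C₂ f)
    (h₀ : C₀.ιSurjective) (h₁ : C₁.ιInjective) (hδf : ∀ y, f y = 0 → ∃ b, δ₀ b = y)
    (hD₀F : ∀ i b, F.app i (D₀.app i b) = 0) (i : I) (a : C₁.X i) (ha : f (C₁.ι i a) = 0) :
    ∃ j, ∃ h : j ≤ i, F.app j (C₁.res h a) = 0 := by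
  obtain ⟨b, hb⟩ := hδf _ ha
  obtain ⟨k, b', hb'⟩ := h₀ b
  obtain ⟨l, hli, hlk⟩ := exists_le_le i k
  obtain ⟨m, hml, hm⟩ := h₁ l (C₁.res hli a - D₀.app l (C₀.res hlk b'))
    (by rw [map_sub, C₁.ι_res, D₀.ι_app, C₀.ι_res, hb', hb, sub_self])
  rw [map_sub, sub_eq_zero] at hm
  exact ⟨m, hml.trans hli, by rw [← C₁.res_res hli hml, hm, ← D₀.app_res, hD₀F]⟩

end DirectedCocone

section Levels

variable [Group G] {p : ℕ}

lemma index_inf_dvd_index_mul_index (N N' : Subgroup G) [N.Normal] :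
    (N ⊓ N').index ∣ N.index * N'.index := by
  rw [← Subgroup.relIndex_mul_index (inf_le_right : N ⊓ N' ≤ N'), Subgroup.inf_relIndex_right]
  exact mul_dvd_mul_right (Subgroup.relIndex_dvd_index_of_normal N N') _

lemma exists_index_inf_eq_pow (hp : p.Prime) {N N' : Subgroup G} [N.Normal]
    (hN : ∃ k, N.index = p ^ k) (hN' : ∃ k, N'.index = p ^ k) :
    ∃ k, (N ⊓ N').index = p ^ k := by
  obtain ⟨a, ha⟩ := hN
  obtain ⟨b, hb⟩ := hN'
  have h := index_inf_dvd_index_mul_index N N'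
  rw [ha, hb, ← pow_add] at h
  obtain ⟨k, -, hk⟩ := (Nat.dvd_prime_pow hp).1 h
  exact ⟨k, hk⟩

variable (p) in
abbrev PLevel (N₀ : Subgroup G) : Type u :=
  {N : Subgroup G // N.Normal ∧ (∃ k, N.index = p ^ k) ∧ N ≤ N₀}

instance PLevel.normal {N₀ : Subgroup G} (i : PLevel p N₀) : (i : Subgroup G).Normal :=
  i.2.1

instance [Fact p.Prime] {N₀ : Subgroup G} : IsCodirectedOrder (PLevel p N₀) :=
  ⟨fun i j => ⟨⟨i.1 ⊓ j.1, inferInstance, exists_index_inf_eq_pow Fact.out i.2.2.1 j.2.2.1,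
    inf_le_left.trans i.2.2.2⟩, (inf_le_left : i.1 ⊓ j.1 ≤ i.1),
    (inf_le_right : i.1 ⊓ j.1 ≤ j.1)⟩⟩

variable [AddCommGroup M]

lemma cohMap_mk'_cohMap_quotMapHom (ρ : G →* AddAut M) {N N' : Subgroup G} [N.Normal]
    [N'.Normal] (hle : N' ≤ N) (h : ∀ y ∈ N, ρ y = 1) (h' : ∀ y ∈ N', ρ y = 1) (n : ℕ)
    (z : groupCoh (quotAut ρ N h) n) :
    cohMap (QuotientGroup.mk' N') (quotAut ρ N' h') ρ (fun _ => rfl) n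
      (cohMap (quotMapHom N N' hle) (quotAut ρ N h) (quotAut ρ N' h')
        (quotAut_comp_quotMap ρ N N' hle h) n z) =
      cohMap (QuotientGroup.mk' N) (quotAut ρ N h) ρ (fun _ => rfl) n z :=
  cohMap_comp _ _ _ (fun _ => rfl) _ _ _ _ _ _ n z

lemma cohMap_quotMapHom_cohMap_quotMapHom (ρ : G →* AddAut M) {N N' N'' : Subgroup G}
    [N.Normal] [N'.Normal] [N''.Normal] (hle : N' ≤ N) (hle' : N'' ≤ N')
    (h : ∀ y ∈ N, ρ y = 1) (h' : ∀ y ∈ N', ρ y = 1) (h'' : ∀ y ∈ N'', ρ y = 1) (n : ℕ)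
    (z : groupCoh (quotAut ρ N h) n) :
    cohMap (quotMapHom N' N'' hle') (quotAut ρ N' h') (quotAut ρ N'' h'')
        (quotAut_comp_quotMap ρ N' N'' hle' h') n
      (cohMap (quotMapHom N N' hle) (quotAut ρ N h) (quotAut ρ N' h')
        (quotAut_comp_quotMap ρ N N' hle h) n z) =
      cohMap (quotMapHom N N'' (hle'.trans hle)) (quotAut ρ N h) (quotAut ρ N'' h'')
        (quotAut_comp_quotMap ρ N N'' (hle'.trans hle) h) n z :=
  cohMap_comp _ _ _ (fun q => QuotientGroup.induction_on q fun _ => rfl) _ _ _ _ _ _ n z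

variable (p) in
/-- Only the `N ≤ N₀` are used, so that one index type serves every module on which `N₀` acts
trivially; by cofinality the limit is the same (`proPCompletionCohIso_iff`). -/
def cohCocone {N₀ : Subgroup G} (ρ : G →* AddAut M) (h₀ : ∀ y ∈ N₀, ρ y = 1) (n : ℕ) :
    DirectedCocone (PLevel p N₀) (groupCoh ρ n) where
  X i := groupCoh (quotAut ρ i.1 fun y hy => h₀ y (i.2.2.2 hy)) n
  res h := cohMap (quotMapHom _ _ h) _ _ (quotAut_comp_quotMap ρ _ _ h _) n
  res_res _ _ := cohMap_quotMapHom_cohMap_quotMapHom ρ _ _ _ _ _ n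
  ι i := cohMap (QuotientGroup.mk' i.1) _ ρ (fun _ => rfl) n
  ι_res h := cohMap_mk'_cohMap_quotMapHom ρ h _ _ n

end Levels

section LevelMaps

variable [Group G] {p : ℕ} {N₀ : Subgroup G} [AddCommGroup M]

lemma Intertwines.quotAut {M' : Type*} [AddCommGroup M'] {φ : M →+ M'} {ρ : G →* AddAut M}
    {ρ' : G →* AddAut M'} (hφ : Intertwines φ ρ ρ') (N : Subgroup G) [N.Normal]
    (h : ∀ y ∈ N, ρ y = 1) (h' : ∀ y ∈ N, ρ' y = 1) :
    Intertwines φ (quotAut ρ N h) (quotAut ρ' N h') :=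
  fun q m => QuotientGroup.induction_on q fun g => hφ g m

def coefCoconeHom {M' : Type*} [AddCommGroup M'] (φ : M →+ M') {ρ : G →* AddAut M}
    {ρ' : G →* AddAut M'} (hφ : Intertwines φ ρ ρ') (h₀ : ∀ y ∈ N₀, ρ y = 1)
    (h₀' : ∀ y ∈ N₀, ρ' y = 1) (n : ℕ) :
    (cohCocone p ρ h₀ n).Hom (cohCocone p ρ' h₀' n) (coefCohMap φ ρ ρ' hφ n) where
  app i := coefCohMap φ _ _ (hφ.quotAut i.1 _ _) n
  app_res h x := coefCohMap_cohMap (quotMapHom _ _ h) φ _ _ _ _ _ _ _ _ n x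
  ι_app i x := (coefCohMap_cohMap (QuotientGroup.mk' i.1) φ _ _ _ _ _ _ _ _ n x).symm

noncomputable def deltaCoconeHom {A : AddSubgroup M} {σ : G →* AddAut M} {σA : G →* AddAut A}
    {σB : G →* AddAut (M ⧸ A)} (hA : Intertwines A.subtype σA σ)
    (hB : Intertwines (QuotientAddGroup.mk' A) σ σB)
    (h₀ : ∀ y ∈ N₀, σ y = 1) (h₀A : ∀ y ∈ N₀, σA y = 1) (h₀B : ∀ y ∈ N₀, σB y = 1) (n : ℕ) :
    (cohCocone p σB h₀B n).Hom (cohCocone p σA h₀A (n + 1)) (delta hA hB n) where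
  app i := delta (hA.quotAut i.1 _ fun y hy => h₀ y (i.2.2.2 hy)) (hB.quotAut i.1 _ _) n
  app_res h x :=
    delta_cohMap _ _ (quotMapHom _ _ h) _ _ (quotAut_comp_quotMap σ _ _ h _) _ _ n x
  ι_app i x := (delta_cohMap _ _ (QuotientGroup.mk' i.1) _ _ (fun _ => rfl) _ _ n x).symm

end LevelMaps

section Extensions

variable [Group G] {p : ℕ} [AddCommGroup M]

theorem proPCompletionCohIso_iff [Fact p.Prime] {N₀ : Subgroup G} [N₀.Normal]
    (hN₀ : ∃ k, N₀.index = p ^ k) {ρ : G →* AddAut M} (h₀ : ∀ y ∈ N₀, ρ y = 1) :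
    ProPCompletionCohIso p G M ρ ↔
      ∀ n, (cohCocone p ρ h₀ n).ιSurjective ∧ (cohCocone p ρ h₀ n).ιInjective := by
  let level (N : Subgroup G) [N.Normal] (hN : ∃ k, N.index = p ^ k) : PLevel p N₀ :=
    ⟨N ⊓ N₀, inferInstance, exists_index_inf_eq_pow Fact.out hN hN₀, inf_le_right⟩
  refine forall_congr' fun n => ⟨fun ⟨hS, hI⟩ => ⟨fun y => ?_, fun i x hx => ?_⟩,
    fun ⟨hS, hI⟩ => ⟨fun y => ?_, fun N hN hNk h x hx => ?_⟩⟩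
  · obtain ⟨N, hN, hNk, h, x, rfl⟩ := hS y
    exact ⟨level N hNk, _, cohMap_mk'_cohMap_quotMapHom ρ inf_le_left h _ n x⟩
  · obtain ⟨N, hN, hNk, hle, hx⟩ := hI i.1 i.2.1 i.2.2.1 _ x hx
    exact ⟨⟨N, hN, hNk, hle.trans i.2.2.2⟩, hle, hx⟩
  · obtain ⟨i, x, rfl⟩ := hS y
    exact ⟨i.1, i.2.1, i.2.2.1, _, x, rfl⟩
  · obtain ⟨j, hj, hjx⟩ := hI (level N hNk) _
      ((cohMap_mk'_cohMap_quotMapHom ρ inf_le_left h _ n x).trans hx)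
    refine ⟨j.1, j.2.1, j.2.2.1, (show j.1 ≤ N ⊓ N₀ from hj).trans inf_le_left, ?_⟩
    exact (cohMap_quotMapHom_cohMap_quotMapHom ρ inf_le_left hj h _ _ n x).symm.trans hjx

theorem ProPCompletionCohIso.of_shortExact [Fact p.Prime] {A : AddSubgroup M}
    {σ : G →* AddAut M} {σA : G →* AddAut A} {σB : G →* AddAut (M ⧸ A)}
    (hA : Intertwines A.subtype σA σ) (hB : Intertwines (QuotientAddGroup.mk' A) σ σB)
    {N₀ : Subgroup G} [N₀.Normal] (hN₀ : ∃ k, N₀.index = p ^ k) (h₀ : ∀ y ∈ N₀, σ y = 1)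
    (hIsoA : ProPCompletionCohIso p G A σA) (hIsoB : ProPCompletionCohIso p G (M ⧸ A) σB) :
    ProPCompletionCohIso p G M σ := by
  have h₀A : ∀ y ∈ N₀, σA y = 1 := fun y hy => eq_one_of_intertwines_subtype hA (h₀ y hy)
  have h₀B : ∀ y ∈ N₀, σB y = 1 := fun y hy => eq_one_of_intertwines_mk' hB (h₀ y hy)
  rw [proPCompletionCohIso_iff hN₀ h₀A] at hIsoA
  rw [proPCompletionCohIso_iff hN₀ h₀B] at hIsoB
  rw [proPCompletionCohIso_iff hN₀ h₀]
  intro n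
  let inc n := coefCoconeHom (p := p) A.subtype hA h₀A h₀ n
  let proj := coefCoconeHom (p := p) _ hB h₀ h₀B n
  refine ⟨DirectedCocone.ιSurjective_of_exact (inc n) proj (deltaCoconeHom hA hB h₀ h₀A h₀B n)
      (hIsoA n).1 (hIsoB n).1 (hIsoA (n + 1)).2 (fun _ => exists_coefCohMap_subtype_eq hA hB)
      (delta_coefCohMap_mk' hA hB n) (fun _ _ => exists_coefCohMap_mk'_eq _ _),
    DirectedCocone.ιInjective_of_exact (inc n) proj (hIsoB n).2
      (fun _ _ => exists_coefCohMap_subtype_eq _ _) ?_⟩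
  cases n with
  | zero =>
    exact DirectedCocone.exists_app_res_eq_zero_of_injective (inc 0) (hIsoA 0).2
      (coefCohMap_subtype_zero_injective hA)
  | succ n =>
    exact DirectedCocone.exists_app_res_eq_zero_of_exact (deltaCoconeHom hA hB h₀ h₀A h₀B n)
      (inc (n + 1)) (hIsoB n).1 (hIsoA (n + 1)).2 (fun _ => exists_delta_eq hA hB)
      (fun _ => coefCohMap_subtype_delta _ _ n)

end Extensions

section Invariants

variable [Group G] [AddCommGroup M] {p : ℕ}

def invariants (ρ : G →* AddAut M) : AddSubgroup M where
  carrier := {m | ∀ g, ρ g m = m}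
  zero_mem' g := map_zero (ρ g)
  add_mem' ha hb g := by rw [map_add, ha g, hb g]
  neg_mem' ha g := by rw [map_neg, ha g]

lemma map_invariants (ρ : G →* AddAut M) (g : G) :
    (invariants ρ).map (ρ g : M →+ M) = invariants ρ := by
  ext m
  refine ⟨?_, fun hm => ⟨m, hm, hm g⟩⟩
  rintro ⟨a, ha, rfl⟩
  exact (ha g).symm ▸ ha

def quotModAut (ρ : G →* AddAut M) (A : AddSubgroup M)
    (hA : ∀ g, A.map (ρ g : M →+ M) = A) : G →* AddAut (M ⧸ A) where
  toFun g := QuotientAddGroup.congr A A (ρ g) (hA g)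
  map_one' := AddEquiv.ext fun q => QuotientAddGroup.induction_on q fun m => by
    change ((ρ 1 m : M) : M ⧸ A) = m
    rw [map_one]
    rfl
  map_mul' g h := AddEquiv.ext fun q => QuotientAddGroup.induction_on q fun m => by
    change ((ρ (g * h) m : M) : M ⧸ A) = (ρ g (ρ h m) : M)
    rw [map_mul]
    rfl

lemma exists_ne_zero_forall_apply_eq [Fact p.Prime] {Q : Type*} [Group Q] (hQ : IsPGroup p Q)
    (σ : Q →* AddAut M) [Finite M] (hM : p ∣ Nat.card M) : ∃ m ≠ (0 : M), ∀ q, σ q m = m := by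
  let _ : MulAction Q M :=
    { smul q m := σ q m
      one_smul m := by
        change σ 1 m = m
        rw [map_one]
        rfl
      mul_smul q q' m := by
        change σ (q * q') m = σ q (σ q' m)
        rw [map_mul]
        rfl }
  obtain ⟨m, hm, hne⟩ := hQ.exists_fixed_point_of_prime_dvd_card_of_fixed_point M hM
    (a := 0) fun q => map_zero (σ q)
  exact ⟨m, hne.symm, hm⟩

lemma one_lt_card_invariants [Fact p.Prime] (ρ : G →* AddAut M) [Finite M]
    (hM : p ∣ Nat.card M) {N : Subgroup G} [N.Normal] (hN : ∃ k, N.index = p ^ k)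
    (h : ∀ y ∈ N, ρ y = 1) : 1 < Nat.card (invariants ρ) := by
  obtain ⟨k, hk⟩ := hN
  have hQ : IsPGroup p (G ⧸ N) := IsPGroup.of_card (n := k) (N.index_eq_card ▸ hk)
  obtain ⟨m, hm0, hm⟩ := exists_ne_zero_forall_apply_eq hQ (quotAut ρ N h) hM
  exact Finite.one_lt_card_iff_nontrivial.2
    ⟨⟨⟨m, fun g => hm g⟩, 0, fun h0 => hm0 (congrArg Subtype.val h0)⟩⟩

end Invariants

theorem proPCompletionCohIso_of_forall_trivial [Group G] {p : ℕ} [Fact p.Prime]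
    (hTriv : ∀ (M : Type v) [AddCommGroup M], (∃ k, Nat.card M = p ^ k) →
      ProPCompletionCohIso p G M 1)
    {N : Subgroup G} [N.Normal] (hN : ∃ k, N.index = p ^ k) [AddCommGroup M]
    {ρ : G →* AddAut M} (h : ∀ y ∈ N, ρ y = 1) (hM : ∃ k, Nat.card M = p ^ k) :
    ProPCompletionCohIso p G M ρ := by
  induction hc : Nat.card M using Nat.strong_induction_on generalizing M with
  | _ c ih =>
    obtain ⟨k, hk⟩ := hM
    have : Finite M :=
      Nat.finite_of_card_ne_zero (hk ▸ pow_ne_zero k (Fact.out : p.Prime).ne_zero)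
    cases k with
    | zero =>
      have : Subsingleton M := (Nat.card_eq_one_iff_unique.1 hk).1
      obtain rfl : ρ = 1 := MonoidHom.ext fun g => AddEquiv.ext fun m => Subsingleton.elim _ _
      exact hTriv M ⟨0, hk⟩
    | succ k =>
      set A := invariants ρ
      have hA : 1 < Nat.card A :=
        one_lt_card_invariants ρ (hk ▸ dvd_pow_self p k.succ_ne_zero) hN h
      have hlt : Nat.card (M ⧸ A) < c := hc ▸ A.card_eq_card_quotient_mul_card_addSubgroup ▸
        lt_mul_of_one_lt_right Nat.card_pos hA
      obtain ⟨i, -, hi⟩ := (Nat.dvd_prime_pow Fact.out).1 (hk ▸ A.card_addSubgroup_dvd_card)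
      obtain ⟨j, -, hj⟩ := (Nat.dvd_prime_pow Fact.out).1 (hk ▸ A.card_quotient_dvd_card)
      have hB : Intertwines (QuotientAddGroup.mk' A) ρ (quotModAut ρ A (map_invariants ρ)) :=
        fun _ _ => rfl
      exact ProPCompletionCohIso.of_shortExact (σA := 1) (fun g a => (a.2 g).symm) hB hN h
        (hTriv A ⟨i, hi⟩)
        (ih _ hlt (fun y hy => eq_one_of_intertwines_mk' hB (h y hy)) ⟨j, hj⟩ rfl)

/-- Proposition 2.2: `G ∈ 𝒢(p)` iff for every finite abelian `p`-group `M` regarded as a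
trivial module, the canonical map `H^*(Ĝ_p, M) → H^*(G, M)` is an isomorphism in every
degree. -/
theorem mem_Gp_iff_trivial_modules (p : ℕ) (hp : p.Prime) (G : Type u) [Group G] :
    InGp p G ↔
      ∀ (M : Type u) [AddCommGroup M], (∃ k, Nat.card M = p ^ k) →
        ProPCompletionCohIso p G M 1 := by
  have := Fact.mk hp
  exact ⟨fun hG M _ hM => hG M 1 hM ⟨⊤, inferInstance, ⟨0, by simp⟩, fun _ _ => rfl⟩,
    fun hTriv M _ ρ hM ⟨N, _, hN, h⟩ => proPCompletionCohIso_of_forall_trivial hTriv hN h hM⟩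

end GoodProfinite
end

section
/- The class ℱ𝒮 of groups having only finitely many subgroups of each finite index is closed under group extensions: if 1 → N → G → Q → 1 is a short exact sequence of groups with N and Q in ℱ𝒮, then G is in ℱ𝒮. -/
/-!
Common definitions for formalizing "Cohomology and profinite topologies for solvable
groups of finite rank" (K. Lorensen).

Group cohomology is defined via inhomogeneous cochains.  The continuous cohomology of the
pro-`p` (resp. profinite) completion of `G` with coefficients in a finite discrete module is
the direct limit, over the normal subgroups `N` of finite `p`-power (resp. finite) index
acting trivially on the module, of the cohomology of the quotients `G ⧸ N`; accordingly, the
statement that the completion map induces an isomorphism on cohomology is rendered as: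
the canonical (inflation) maps from this directed system to `H^*(G, M)` are jointly
surjective, and any class of the system killed in `H^*(G, M)` is killed at a deeper level of
the system.
-/

open Function TensorProduct

universe u v

namespace GoodProfinite

variable {G H : Type u} {M : Type v}

/-- The multiplicative group structure on `AddAut M` (composition), as in older Mathlib. -/
instance addAutGroupOld (A : Type*) [Add A] : Group (AddAut A) where
  mul g h := AddEquiv.trans h g
  one := AddEquiv.refl _
  inv := AddEquiv.symm
  mul_assoc _ _ _ := rfl
  one_mul _ := rfl
  mul_one _ := rfl
  inv_mul_cancel := AddEquiv.self_trans_symm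

/-!
A subgroup `H` of index `n` in `G` meets the normal subgroup `ι N = ker π` in a subgroup
whose preimage in `N` has index at most `n`, so there are finitely many possible
intersections. If `H` and `H₁` have the same intersection with `ker π`, then
`H ∩ H₁ = H₁ ∩ π⁻¹(π(H ∩ H₁))` because `H ∩ H₁ ⊇ H₁ ∩ ker π`, and `π(H ∩ H₁)` is a subgroup
of index at most `n²` in `Q`. Hence `H` contains one of finitely many finite-index subgroups
of `G`, each of which has only finitely many overgroups.
-/

theorem _root_.Subgroup.finite_setOf_le_of_index_ne_zero {G : Type*} [Group G]
    {K : Subgroup G} (hK : K.index ≠ 0) : {H : Subgroup G | K ≤ H}.Finite := by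
  have : Finite (G ⧸ K) := Subgroup.index_ne_zero_iff_finite.mp hK
  refine Set.Finite.of_finite_image
    (f := fun H : Subgroup G => (QuotientGroup.mk '' (H : Set G) : Set (G ⧸ K))) (Set.toFinite _) ?_
  suffices h : ∀ ⦃H₁ H₂ : Subgroup G⦄, K ≤ H₂ →
      QuotientGroup.mk '' (H₁ : Set G) = (QuotientGroup.mk '' (H₂ : Set G) : Set (G ⧸ K)) →
      H₁ ≤ H₂ from
    fun H₁ h₁ H₂ h₂ he => le_antisymm (h h₂ he) (h h₁ he.symm)
  intro H₁ H₂ hKH₂ he x hx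
  obtain ⟨y, hy, hyx⟩ : QuotientGroup.mk x ∈ QuotientGroup.mk '' (H₂ : Set G) :=
    he ▸ Set.mem_image_of_mem _ hx
  have hyx : y⁻¹ * x ∈ K := QuotientGroup.eq.mp hyx
  simpa using mul_mem hy (hKH₂ hyx)

theorem _root_.Subgroup.index_comap_ne_zero_and_le {G N : Type*} [Group G] [Group N]
    (f : N →* G) {H : Subgroup G} (hH : H.index ≠ 0) :
    (H.comap f).index ≠ 0 ∧ (H.comap f).index ≤ H.index := by
  rw [Subgroup.index_comap]
  refine ⟨fun h => hH (H.index_eq_zero_of_relIndex_eq_zero h), ?_⟩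
  rw [← H.relIndex_top_right]
  exact Subgroup.relIndex_le_of_le_right le_top (by rwa [Subgroup.relIndex_top_right])

theorem _root_.Subgroup.inf_comap_map_inf_le {G Q : Type*} [Group G] [Group Q] (π : G →* Q)
    {H K : Subgroup G} (hK : K ⊓ π.ker ≤ H) : K ⊓ ((H ⊓ K).map π).comap π ≤ H := by
  rintro x ⟨hxK, y, ⟨hyH, hyK⟩, hyx⟩
  have : y⁻¹ * x ∈ H := hK ⟨K.mul_mem (K.inv_mem hyK) hxK, by simp [hyx]⟩
  simpa using mul_mem hyH this

theorem _root_.Subgroup.inf_range_le_of_comap_eq {G N : Type*} [Group G] [Group N]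
    (ι : N →* G) {H H₁ : Subgroup G} (h : H.comap ι = H₁.comap ι) : H₁ ⊓ ι.range ≤ H := by
  rintro _ ⟨hx, a, rfl⟩
  show a ∈ H.comap ι
  rwa [h]

theorem InFS.finite_setOf_index_le {G : Type u} [Group G] (hG : InFS G) (n : ℕ) :
    {H : Subgroup G | H.index ≠ 0 ∧ H.index ≤ n}.Finite := by
  refine ((Set.finite_Icc 1 n).biUnion fun d hd => hG d (Nat.one_le_iff_ne_zero.mp hd.1)).subset ?_
  rintro H ⟨h0, hn⟩
  exact Set.mem_biUnion (x := H.index) ⟨Nat.one_le_iff_ne_zero.mpr h0, hn⟩ rfl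

theorem InFS.finite_setOf_index_le_of_inf_ker_le {G Q : Type u} [Group G] [Group Q]
    (hQ : InFS Q) {π : G →* Q} (hπ : Surjective π) {K : Subgroup G} (hK : K.index ≠ 0)
    (n : ℕ) : {H : Subgroup G | H.index ≠ 0 ∧ H.index ≤ n ∧ K ⊓ π.ker ≤ H}.Finite := by
  refine ((hQ.finite_setOf_index_le (n * K.index)).biUnion fun D hD =>
    Subgroup.finite_setOf_le_of_index_ne_zero (K := K ⊓ D.comap π)
      (Subgroup.index_inf_ne_zero hK (by rw [D.index_comap_of_surjective hπ]; exact hD.1))).subset ?_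
  rintro H ⟨hH0, hHn, hKH⟩
  have hHK0 : (H ⊓ K).index ≠ 0 := Subgroup.index_inf_ne_zero hH0 hK
  have hdvd : ((H ⊓ K).map π).index ∣ (H ⊓ K).index := (H ⊓ K).index_map_dvd hπ
  refine Set.mem_biUnion ⟨ne_zero_of_dvd_ne_zero hHK0 hdvd, ?_⟩
    (Subgroup.inf_comap_map_inf_le π hKH)
  calc ((H ⊓ K).map π).index ≤ (H ⊓ K).index := Nat.le_of_dvd (Nat.pos_of_ne_zero hHK0) hdvd
    _ ≤ H.index * K.index := Subgroup.index_inf_le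
    _ ≤ n * K.index := Nat.mul_le_mul_right _ hHn

theorem FS_closed_under_extension_general (N G Q : Type u) [Group N] [Group G] [Group Q]
    (ι : N →* G) (π : G →* Q) (hπ : Surjective π)
    (hex : ι.range = π.ker) (hN : InFS N) (hQ : InFS Q) : InFS G := by
  intro n hn
  refine Set.Finite.of_finite_fibers (fun H : Subgroup G => H.comap ι) ?_ ?_
  · refine (hN.finite_setOf_index_le n).subset ?_
    rintro _ ⟨H, hH : H.index = n, rfl⟩
    exact hH ▸ H.index_comap_ne_zero_and_le ι (hH ▸ hn)
  · rintro _ ⟨H₁, hH₁ : H₁.index = n, rfl⟩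
    refine (hQ.finite_setOf_index_le_of_inf_ker_le hπ (hH₁ ▸ hn) n).subset ?_
    rintro H ⟨hH : H.index = n, hHH₁ : H.comap ι = H₁.comap ι⟩
    exact ⟨hH ▸ hn, hH.le, hex ▸ Subgroup.inf_range_le_of_comap_eq ι hHH₁⟩

/-- The class `ℱ𝒮` is closed under group extensions. -/
theorem FS_closed_under_extension (N G Q : Type u) [Group N] [Group G] [Group Q]
    (ι : N →* G) (π : G →* Q) (hι : Injective ι) (hπ : Surjective π)
    (hex : ι.range = π.ker) (hN : InFS N) (hQ : InFS Q) : InFS G :=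
  FS_closed_under_extension_general N G Q ι π hπ hex hN hQ

end GoodProfinite
end
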